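/- Let G be a finite group, let K be a Carter subgroup of G with centre Z(K), and let z ∈ Z(K) with z ≠ 1. Assume that any two Carter subgroups of the centralizer C_G(z) are conjugate in C_G(z). Then no G-conjugate of z other than z itself lies in Z(K): for every g ∈ G, if g⁻¹zg ∈ Z(K) then g⁻¹zg = z. -/

import Mathlib

/-!
Put `H = C_G(z)`. Since `z` is central in `K` and `g⁻¹ z g` is central in `K`, both `K` and
`g K g⁻¹` lie in `H`, where they are Carter subgroups. By hypothesis some `c ∈ H` conjugates
`K` onto `g K g⁻¹`, so `c⁻¹ g` normalizes `K` and hence lies in `K ≤ H`. Thus `g ∈ H`,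
i.e. `g` commutes with `z`.
-/

/-- A Carter subgroup of a group `G` is a nilpotent self-normalizing subgroup. -/
def IsCarterSubgroup {G : Type*} [Group G] (K : Subgroup G) : Prop :=
  Group.IsNilpotent K ∧ Subgroup.normalizer (K : Set G) = K

open Subgroup

def CarterSubgroupsConjugate (G : Type*) [Group G] : Prop :=
  ∀ K₁ K₂ : Subgroup G, IsCarterSubgroup K₁ → IsCarterSubgroup K₂ →
    ∃ g : G, K₁.map (MulAut.conj g).toMonoidHom = K₂

section

variable {G : Type*} [Group G]

theorem Subgroup.map_conj_map_conj (a b : G) (K : Subgroup G) :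
    (K.map (MulAut.conj b).toMonoidHom).map (MulAut.conj a).toMonoidHom =
      K.map (MulAut.conj (a * b)).toMonoidHom := by
  rw [map_map]
  congr 1
  ext x
  simp [mul_assoc]

theorem Subgroup.map_conj_eq_of_map_conj_subgroupOf_eq {H K₁ K₂ : Subgroup G}
    (h₁ : K₁ ≤ H) (h₂ : K₂ ≤ H) {c : H}
    (hc : (K₁.subgroupOf H).map (MulAut.conj c).toMonoidHom = K₂.subgroupOf H) :
    K₁.map (MulAut.conj (c : G)).toMonoidHom = K₂ := by
  have hcomm : H.subtype.comp (MulAut.conj c).toMonoidHom =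
      (MulAut.conj (c : G)).toMonoidHom.comp H.subtype := by
    ext; rfl
  rw [← map_subgroupOf_eq_of_le h₁, ← map_subgroupOf_eq_of_le h₂, ← hc, map_map, map_map,
    hcomm]

namespace IsCarterSubgroup

variable {K : Subgroup G}

theorem map_equiv {G' : Type*} [Group G'] (hK : IsCarterSubgroup K) (e : G ≃* G') :
    IsCarterSubgroup (K.map e.toMonoidHom) := by
  have := hK.1
  exact ⟨Group.nilpotent_of_mulEquiv (K.equivMapOfInjective _ e.injective),
    by rw [← map_equiv_normalizer_eq, hK.2]⟩

theorem subgroupOf (hK : IsCarterSubgroup K) {H : Subgroup G} (hKH : K ≤ H) :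
    IsCarterSubgroup (K.subgroupOf H) := by
  have := hK.1
  exact ⟨Group.nilpotent_of_mulEquiv (subgroupOfEquivOfLe hKH).symm,
    by rw [← subgroupOf_normalizer_eq hKH, hK.2]⟩

theorem mem_of_map_conj_eq (hK : IsCarterSubgroup K) {g : G}
    (hg : K.map (MulAut.conj g).toMonoidHom = K) : g ∈ K :=
  hK.2 ▸ mem_normalizer_iff_map_conj_eq.mpr hg

theorem mem_of_map_conj_le (hK : IsCarterSubgroup K) {H : Subgroup G} (hKH : K ≤ H)
    (hH : CarterSubgroupsConjugate H) {g : G} (hg : K.map (MulAut.conj g).toMonoidHom ≤ H) :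
    g ∈ H := by
  obtain ⟨c, hc⟩ := hH _ _ (hK.subgroupOf hKH) ((hK.map_equiv (MulAut.conj g)).subgroupOf hg)
  have hcg := map_conj_eq_of_map_conj_subgroupOf_eq hKH hg hc
  have hcK : (c : G)⁻¹ * g ∈ K := hK.mem_of_map_conj_eq <| by
    rw [← map_conj_map_conj, ← hcg, map_conj_map_conj, inv_mul_cancel]
    ext
    simp
  simpa using H.mul_mem c.2 (hKH hcK)

end IsCarterSubgroup

end

theorem no_other_conjugate_in_center_general {G : Type*} [Group G]
    (K : Subgroup G) (hK : IsCarterSubgroup K)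
    (z : G) (hzc : ∀ k ∈ K, z * k = k * z)
    (hconj : ∀ K₁ K₂ : Subgroup ↥(Subgroup.centralizer {z}),
      IsCarterSubgroup K₁ → IsCarterSubgroup K₂ →
      ∃ g : ↥(Subgroup.centralizer {z}), K₁.map (MulAut.conj g).toMonoidHom = K₂)
    (g : G)
    (hgc : ∀ k ∈ K, (g⁻¹ * z * g) * k = k * (g⁻¹ * z * g)) :
    g⁻¹ * z * g = z := by
  have hKz : K ≤ centralizer {z} := fun k hk => mem_centralizer_singleton_iff.mpr (hzc k hk).symm
  have hgKz : K.map (MulAut.conj g).toMonoidHom ≤ centralizer {z} := by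
    rintro _ ⟨k, hk, rfl⟩
    rw [mem_centralizer_singleton_iff]
    calc g * k * g⁻¹ * z = g * (k * (g⁻¹ * z * g)) * g⁻¹ := by group
      _ = g * ((g⁻¹ * z * g) * k) * g⁻¹ := by rw [hgc k hk]
      _ = z * (g * k * g⁻¹) := by group
  have hgz : g * z = z * g :=
    mem_centralizer_singleton_iff.mp (hK.mem_of_map_conj_le hKz hconj hgKz)
  rw [mul_assoc, ← hgz, ← mul_assoc, inv_mul_cancel, one_mul]

/-- No conjugate of a nontrivial central element `z` of a Carter subgroup `K`,
other than `z` itself, lies in `Z(K)`, provided Carter subgroups of `C_G(z)`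
are conjugate. -/
theorem no_other_conjugate_in_center {G : Type*} [Group G] [Finite G]
    (K : Subgroup G) (hK : IsCarterSubgroup K)
    (z : G) (hz : z ≠ 1) (hzK : z ∈ K) (hzc : ∀ k ∈ K, z * k = k * z)
    (hconj : ∀ K₁ K₂ : Subgroup ↥(Subgroup.centralizer {z}),
      IsCarterSubgroup K₁ → IsCarterSubgroup K₂ →
      ∃ g : ↥(Subgroup.centralizer {z}), K₁.map (MulAut.conj g).toMonoidHom = K₂)
    (g : G) (hgK : g⁻¹ * z * g ∈ K)
    (hgc : ∀ k ∈ K, (g⁻¹ * z * g) * k = k * (g⁻¹ * z * g)) :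
    g⁻¹ * z * g = z :=
  no_other_conjugate_in_center_general K hK z hzc hconj g hgc
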